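/- arXiv:2104.11361 — 13 statements merged into one kernel-verified Lean document; each statement's English description precedes it below -/
import Mathlib

section
/- Let C be an abelian category and Y ⊆ X ⊆ C classes of objects, with Y closed by n-quotients in X and X closed under direct summands. Then Y is closed under direct summands, i.e., if Y ⊕ Z ∈ Y then Y ∈ Y. -/
open CategoryTheory CategoryTheory.Limits

universe w v u

variable {C : Type u} [Category.{v} C] [Abelian C] [HasExt.{w} C]

/-- `Ext^i(M, N) = 0`. -/
def extZero (M N : C) (i : ℕ) : Prop := Subsingleton (Abelian.Ext M N i)

/-- `0 → A → B → D → 0` is a short exact sequence. -/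
def IsSES {A B D : C} (f : A ⟶ B) (g : B ⟶ D) : Prop :=
  ∃ w : f ≫ g = 0, (ShortComplex.mk f g w).ShortExact

/-- There exists a short exact sequence `0 → A → B → D → 0`. -/
def SES (A B D : C) : Prop := ∃ (f : A ⟶ B) (g : B ⟶ D), IsSES f g

/-- The right orthogonal class `𝒯^⊥` (vanishing of `Ext^i` for all `i > 0`). -/
def rPerp (𝒯 : Set C) : Set C := {N | ∀ M ∈ 𝒯, ∀ i, 0 < i → extZero M N i}

/-- The right `1`-st orthogonal class `𝒯^{⊥₁}`. -/
def rPerp1 (𝒯 : Set C) : Set C := {N | ∀ M ∈ 𝒯, extZero M N 1}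

/-- The left orthogonal class `⊥𝒮`. -/
def lPerp (𝒮 : Set C) : Set C := {M | ∀ N ∈ 𝒮, ∀ i, 0 < i → extZero M N i}

/-- The left `1`-st orthogonal class `⊥₁𝒮`. -/
def lPerp1 (𝒮 : Set C) : Set C := {M | ∀ N ∈ 𝒮, extZero M N 1}

/-- `α` is a relative cogenerator in `𝒳`. -/
def IsRelCogen (α 𝒳 : Set C) : Prop :=
  α ⊆ 𝒳 ∧ ∀ X ∈ 𝒳, ∃ (W X' : C), W ∈ α ∧ X' ∈ 𝒳 ∧ SES X W X'

/-- `β` is a relative generator in `𝒳`. -/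
def IsRelGen (β 𝒳 : Set C) : Prop :=
  β ⊆ 𝒳 ∧ ∀ X ∈ 𝒳, ∃ (X' W : C), W ∈ β ∧ X' ∈ 𝒳 ∧ SES X' W X

/-- `pd_𝒳(𝒯) ≤ n`. -/
def pdLE (𝒳 𝒯 : Set C) (n : ℕ) : Prop :=
  ∀ M ∈ 𝒯, ∀ X ∈ 𝒳, ∀ k, n < k → extZero M X k

/-- `𝒴` is closed by `n`-quotients in `𝒳`: for any exact sequence
`0 → K n → Y (n-1) → ⋯ → Y 0 → K 0 → 0` (encoded by its short exact pieces
`0 → K (i+1) → Y i → K i → 0`) with all `Y i ∈ 𝒴` and all kernels `K i ∈ 𝒳`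
(in particular the end terms), the end term `K 0` is in `𝒴`. -/
def ClosedByQuotients (𝒴 𝒳 : Set C) (n : ℕ) : Prop :=
  ∀ (K Y : ℕ → C),
    (∀ i < n, Y i ∈ 𝒴) →
    (∀ i ≤ n, K i ∈ 𝒳) →
    (∀ i < n, SES (K (i + 1)) (Y i) (K i)) →
    K 0 ∈ 𝒴

/-- `M` has a `𝒴_𝒳`-coresolution of length `n`, i.e. an exact sequence
`0 → M → Y 0 → ⋯ → Y (n-1) → Z n → 0` with `Z n ∈ 𝒳 ∩ 𝒴`, `Y i ∈ 𝒴`, and all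
intermediate images `Z i ∈ 𝒳`. -/
def CoresLen (𝒴 𝒳 : Set C) (M : C) (n : ℕ) : Prop :=
  ∃ (Z Y : ℕ → C), Z 0 = M ∧ Z n ∈ 𝒳 ∩ 𝒴 ∧
    (∀ i < n, Y i ∈ 𝒴) ∧ (∀ i, 0 < i → i < n → Z i ∈ 𝒳) ∧
    (∀ i < n, SES (Z i) (Y i) (Z (i + 1)))

/-- The `𝒴_𝒳`-coresolution dimension of `M`, as an extended natural number. -/
noncomputable def coresdim (𝒴 𝒳 : Set C) (M : C) : ℕ∞ :=
  sInf {e : ℕ∞ | ∃ m : ℕ, e = (m : ℕ∞) ∧ CoresLen 𝒴 𝒳 M m}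

/-- The `𝒳`-injective dimension of `M`, as an extended natural number. -/
noncomputable def relId (𝒳 : Set C) (M : C) : ℕ∞ :=
  sInf {e : ℕ∞ | ∃ m : ℕ, e = (m : ℕ∞) ∧ ∀ X ∈ 𝒳, ∀ k, m < k → extZero X M k}

/-- `𝒯` is precovering. -/
def Precovering (𝒯 : Set C) : Prop :=
  ∀ M : C, ∃ (Z : C) (f : Z ⟶ M), Z ∈ 𝒯 ∧
    ∀ (Z' : C) (h : Z' ⟶ M), Z' ∈ 𝒯 → ∃ h' : Z' ⟶ Z, h' ≫ f = h

/-- `𝒯` is preenveloping. -/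
def Preenveloping (𝒯 : Set C) : Prop :=
  ∀ M : C, ∃ (Z : C) (f : M ⟶ Z), Z ∈ 𝒯 ∧
    ∀ (Z' : C) (h : M ⟶ Z'), Z' ∈ 𝒯 → ∃ h' : Z ⟶ Z', f ≫ h' = h

/-- `𝒯 = add 𝒯`: closed under finite coproducts and under direct summands (retracts). -/
def IsAddClosed (𝒯 : Set C) : Prop :=
  (∀ A B : C, A ∈ 𝒯 → B ∈ 𝒯 → (A ⊞ B) ∈ 𝒯) ∧
  (∀ (A B : C) (i : A ⟶ B) (r : B ⟶ A), i ≫ r = 𝟙 A → B ∈ 𝒯 → A ∈ 𝒯)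

/-- Closed under direct summands (retracts). -/
def IsSmdClosed (𝒯 : Set C) : Prop :=
  ∀ (A B : C) (i : A ⟶ B) (r : B ⟶ A), i ≫ r = 𝟙 A → B ∈ 𝒯 → A ∈ 𝒯

/-- Closed under extensions. -/
def IsExtClosed (𝒯 : Set C) : Prop :=
  ∀ (A E B : C), A ∈ 𝒯 → B ∈ 𝒯 → SES A E B → E ∈ 𝒯

/-- `ℬ` is `𝒳`-coresolving: it contains an `𝒳`-injective relative cogenerator in `𝒳`,
is closed under mono-cokernels in `ℬ ∩ 𝒳`, and is closed under extensions. -/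
def IsCoresolving (ℬ 𝒳 : Set C) : Prop :=
  (∃ α : Set C, α ⊆ ℬ ∩ 𝒳 ∧ (∀ X ∈ 𝒳, ∀ A ∈ α, ∀ i, 0 < i → extZero X A i) ∧
    IsRelCogen α 𝒳) ∧
  (∀ (M M' M'' : C), M ∈ ℬ ∩ 𝒳 → M' ∈ ℬ ∩ 𝒳 → SES M M' M'' → M'' ∈ ℬ) ∧
  IsExtClosed ℬ

/-- `(𝒜, ℬ)` is a left `𝒳`-complete pair. -/
def LeftComplete (𝒜 ℬ 𝒳 : Set C) : Prop :=
  ∀ X ∈ 𝒳, ∃ B A : C, B ∈ ℬ ∩ 𝒳 ∧ A ∈ 𝒜 ∩ 𝒳 ∧ SES B A X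

/-- `(𝒜, ℬ)` is a right `𝒳`-complete pair. -/
def RightComplete (𝒜 ℬ 𝒳 : Set C) : Prop :=
  ∀ X ∈ 𝒳, ∃ B A : C, B ∈ ℬ ∩ 𝒳 ∧ A ∈ 𝒜 ∩ 𝒳 ∧ SES X B A

/-- `(𝒜, ℬ)` is an `𝒳`-hereditary pair. -/
def IsHereditary (𝒜 ℬ 𝒳 : Set C) : Prop :=
  ∀ A ∈ 𝒜 ∩ 𝒳, ∀ B ∈ ℬ ∩ 𝒳, ∀ i, 1 ≤ i → extZero A B i

/-- `M` has a (possibly infinite) `𝒴_𝒳`-coresolution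
`0 → M → Y 0 → Y 1 → ⋯` with `Y i ∈ 𝒴 ∪ {0}` and all images in `𝒳 ∪ {0}`. -/
def InfCores (𝒳 𝒴 : Set C) (M : C) : Prop :=
  ∃ (Z Y : ℕ → C), Z 0 = M ∧
    (∀ i, Y i ∈ 𝒴 ∨ IsZero (Y i)) ∧
    (∀ i, 0 < i → Z i ∈ 𝒳 ∨ IsZero (Z i)) ∧
    (∀ i, SES (Z i) (Y i) (Z (i + 1)))

/-- The class `(𝒳,𝒴)_∞^∨`. -/
def InfCoresClass (𝒳 𝒴 : Set C) : Set C := {M | M ∈ 𝒳 ∧ InfCores 𝒳 𝒴 M}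

/-- The class `(𝒳,𝒴)^∨`. -/
def FinCoresClass (𝒳 𝒴 : Set C) : Set C := {M | M ∈ 𝒳 ∧ ∃ m : ℕ, CoresLen 𝒴 𝒳 M m}

omit [HasExt.{w} C] in
theorem ses_biprod_inl_snd (Y Z : C) : SES Y (Y ⊞ Z) Z :=
  ⟨biprod.inl, biprod.snd, by simp, (ShortComplex.Splitting.ofHasBinaryBiproduct Y Z).shortExact⟩

omit [HasExt.{w} C] in
theorem ses_biprod_inr_fst (Y Z : C) : SES Z (Y ⊞ Z) Y :=
  ⟨biprod.inr, biprod.fst, by simp,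
    ShortComplex.Splitting.shortExact
      { r := biprod.snd, s := biprod.inl, f_r := by simp, s_g := by simp,
        id := by rw [add_comm]; exact biprod.total }⟩

omit [HasExt.{w} C] in
/-- Splicing the two sequences alternately gives `⋯ → E → E → B → 0` with kernels alternating
between `B` and `A`, so `B` is an `n`-quotient of copies of `E` for every `n`. -/
theorem ClosedByQuotients.mem_of_ses_of_ses {𝒴 𝒳 : Set C} {n : ℕ}
    (hq : ClosedByQuotients 𝒴 𝒳 n) {A E B : C} (hE : E ∈ 𝒴) (hA : A ∈ 𝒳) (hB : B ∈ 𝒳)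
    (hAB : SES A E B) (hBA : SES B E A) : B ∈ 𝒴 := by
  refine hq (fun i => if Even i then B else A) (fun _ => E) (fun _ _ => hE)
    (fun i _ => by split <;> assumption) (fun i _ => ?_)
  by_cases hi : Even i
  · simpa [hi, Nat.even_add_one] using hAB
  · simpa [hi, Nat.even_add_one] using hBA

theorem stmt_1_general (n : ℕ) (𝒴 𝒳 : Set C) (hYX : 𝒴 ⊆ 𝒳)
    (hq : ClosedByQuotients 𝒴 𝒳 n) (hsmd : IsSmdClosed 𝒳) :
    ∀ Y Z : C, (Y ⊞ Z) ∈ 𝒴 → Y ∈ 𝒴 := by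
  intro Y Z hYZ
  have hY : Y ∈ 𝒳 := hsmd Y (Y ⊞ Z) biprod.inl biprod.fst biprod.inl_fst (hYX hYZ)
  have hZ : Z ∈ 𝒳 := hsmd Z (Y ⊞ Z) biprod.inr biprod.snd biprod.inr_snd (hYX hYZ)
  exact hq.mem_of_ses_of_ses hYZ hZ hY (ses_biprod_inr_fst Y Z) (ses_biprod_inl_snd Y Z)

/-- if `𝒴 ⊆ 𝒳` is closed by `n`-quotients in `𝒳` and `𝒳` is closed
under direct summands, then `𝒴` is closed under direct summands: if `Y ⊞ Z ∈ 𝒴`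
then `Y ∈ 𝒴`. -/
theorem stmt_1 (n : ℕ) (hn : 1 ≤ n) (𝒴 𝒳 : Set C) (hYX : 𝒴 ⊆ 𝒳)
    (hq : ClosedByQuotients 𝒴 𝒳 n) (hsmd : IsSmdClosed 𝒳) :
    ∀ Y Z : C, (Y ⊞ Z) ∈ 𝒴 → Y ∈ 𝒴 :=
  stmt_1_general n 𝒴 𝒳 hYX hq hsmd
end

section
/- Let C be an abelian category, X, T ⊆ C classes of objects, and α ⊆ T^⊥ ∩ X^⊥ a relative cogenerator in X. Then for n ≥ 1, the class X ∩ T^⊥ is closed by n-quotients in X if and only if pd_X(T) ≤ n. -/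
open CategoryTheory CategoryTheory.Limits

universe w v u

variable {C : Type u} [Category.{v} C] [Abelian C] [HasExt.{w} C]

/-- Dimension shifting (quotient): if `0 → A → B → D → 0` is exact,
`Ext M B m = 0` and `Ext M A (m+1) = 0`, then `Ext M D m = 0`. -/
private lemma ext_quot {M A B D : C} {f : A ⟶ B} {g : B ⟶ D} (h : IsSES f g) {m : ℕ}
    (hB : Subsingleton (Abelian.Ext M B m))
    (hA : Subsingleton (Abelian.Ext M A (m + 1))) :
    Subsingleton (Abelian.Ext M D m) := by
  obtain ⟨w, hS⟩ := h
  refine subsingleton_of_forall_eq 0 fun x => ?_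
  have h1 : x.comp hS.extClass rfl = 0 := Subsingleton.elim _ _
  obtain ⟨x₂, hx₂⟩ := Abelian.Ext.covariant_sequence_exact₃ M hS x rfl h1
  rw [← hx₂, Subsingleton.elim x₂ 0, Abelian.Ext.zero_comp]

/-- Dimension shifting (sub): if `0 → A → B → D → 0` is exact,
`Ext M D m = 0` and `Ext M B (m+1) = 0`, then `Ext M A (m+1) = 0`. -/
private lemma ext_sub {M A B D : C} {f : A ⟶ B} {g : B ⟶ D} (h : IsSES f g) {m : ℕ}
    (hD : Subsingleton (Abelian.Ext M D m))
    (hB : Subsingleton (Abelian.Ext M B (m + 1))) :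
    Subsingleton (Abelian.Ext M A (m + 1)) := by
  obtain ⟨w, hS⟩ := h
  refine subsingleton_of_forall_eq 0 fun x => ?_
  have h1 : x.comp (Abelian.Ext.mk₀ f) (add_zero _) = 0 := Subsingleton.elim _ _
  obtain ⟨x₃, hx₃⟩ := Abelian.Ext.covariant_sequence_exact₁ M hS x h1 rfl
  rw [← hx₃, Subsingleton.elim x₃ 0, Abelian.Ext.zero_comp]

/-- if `α ⊆ 𝒯^⊥ ∩ 𝒳^⊥` is a relative cogenerator in `𝒳`, then for
`n ≥ 1`, `𝒳 ∩ 𝒯^⊥` is closed by `n`-quotients in `𝒳` iff `pd_𝒳(𝒯) ≤ n`. -/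
theorem stmt_2 (𝒳 𝒯 α : Set C) (hα : α ⊆ rPerp 𝒯 ∩ rPerp 𝒳)
    (hcog : IsRelCogen α 𝒳) (n : ℕ) (hn : 1 ≤ n) :
    ClosedByQuotients (𝒳 ∩ rPerp 𝒯) 𝒳 n ↔ pdLE 𝒳 𝒯 n := by
  constructor
  · -- closed by n-quotients → pd_𝒳(𝒯) ≤ n
    intro hcl M hM X hX k hk
    obtain ⟨hα𝒳, hstep⟩ := hcog
    choose Wf Zf hW hZ hses using hstep
    -- the chain X = Z 0 → W 0 → Z 1 → ⋯ of cosyzygies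
    let Z : ℕ → {A : C // A ∈ 𝒳} := fun j =>
      Nat.rec ⟨X, hX⟩ (fun _ p => ⟨Zf p.1 p.2, hZ p.1 p.2⟩) j
    have hsesZ : ∀ j, SES (Z j).1 (Wf (Z j).1 (Z j).2) (Z (j + 1)).1 :=
      fun j => hses _ _
    -- apply closedness to 0 → X → W 0 → ⋯ → W (n-1) → Z n → 0
    have hKn : (Z n).1 ∈ 𝒳 ∩ rPerp 𝒯 := by
      refine hcl (fun i => (Z (n - i)).1)
        (fun i => Wf (Z (n - 1 - i)).1 (Z (n - 1 - i)).2) ?_ ?_ ?_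
      · intro i _
        exact ⟨hα𝒳 (hW _ _), (hα (hW _ _)).1⟩
      · intro i _; exact (Z (n - i)).2
      · intro i hi
        have e1 : n - (i + 1) = n - 1 - i := by omega
        have e2 : n - i = n - 1 - i + 1 := by omega
        show SES (Z (n - (i + 1))).1 (Wf (Z (n - 1 - i)).1 (Z (n - 1 - i)).2)
          (Z (n - i)).1
        rw [e1, e2]
        exact hsesZ _
    -- dimension shifting down the coresolution
    have claim : ∀ j, j ≤ n → ∀ m, j < m →
        Subsingleton (Abelian.Ext M (Z (n - j)).1 m) := by
      intro j
      induction j with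
      | zero =>
        intro _ m hm
        exact hKn.2 M hM m (by omega)
      | succ j ih =>
        intro hj m hm
        obtain ⟨m', rfl⟩ : ∃ m', m = m' + 1 := ⟨m - 1, by omega⟩
        have e : n - j = n - (j + 1) + 1 := by omega
        have hs := hsesZ (n - (j + 1))
        obtain ⟨f, g, hfg⟩ := hs
        have hih := ih (by omega) m' (by omega)
        rw [e] at hih
        exact ext_sub hfg hih ((hα (hW _ _)).1 M hM (m' + 1) (by omega))
    have h := claim n le_rfl k hk
    rw [Nat.sub_self] at h
    exact h
  · -- pd_𝒳(𝒯) ≤ n → closed by n-quotients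
    intro hpd K Y hY hK hses
    refine ⟨hK 0 (by omega), ?_⟩
    intro M hM i hi
    have claim : ∀ j, j ≤ n → ∀ m, n - j < m →
        Subsingleton (Abelian.Ext M (K (n - j)) m) := by
      intro j
      induction j with
      | zero =>
        intro _ m hm
        exact hpd M hM (K n) (hK n le_rfl) m (by omega)
      | succ j ih =>
        intro hj m hm
        have hi' : n - (j + 1) < n := by omega
        obtain ⟨f, g, hfg⟩ := hses _ hi'
        have e : n - (j + 1) + 1 = n - j := by omega
        have hih := ih (by omega) (m + 1) (by omega)
        rw [← e] at hih
        exact ext_quot hfg ((hY _ hi').2 M hM m (by omega)) hih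
    have h := claim n le_rfl i (by omega)
    rw [Nat.sub_self] at h
    exact h
end

section
/- Let T be an n-X-cluster tilting class in an abelian category C with pd_X(T) ≤ n−1. Then T = X ∩ T^⊥ = X. -/
open CategoryTheory CategoryTheory.Limits

universe w v u

variable {C : Type u} [Category.{v} C] [Abelian C] [HasExt.{w} C]

/-- Auxiliary: from a SES `A → B → D` and vanishing of `Ext^i(T,B)` and
`Ext^(i+1)(T,A)`, deduce vanishing of `Ext^i(T,D)`. -/
lemma extZero_of_ses {A B D : C} (T : C) (h : SES A B D) (i : ℕ)
    (hB : extZero T B i) (hA : extZero T A (i + 1)) : extZero T D i := by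
  obtain ⟨f, g, w, hS⟩ := h
  refine subsingleton_of_forall_eq 0 fun x => ?_
  have hx : x.comp hS.extClass rfl = 0 := by
    have := hA.elim (x.comp hS.extClass rfl) 0; exact this
  obtain ⟨x₂, hx₂⟩ := Abelian.Ext.covariant_sequence_exact₃ T hS x rfl hx
  have : x₂ = 0 := hB.elim x₂ 0
  rw [this] at hx₂
  rw [← hx₂, Abelian.Ext.zero_comp]

/-- if `𝒯` is `n`-`𝒳`-cluster tilting and `pd_𝒳(𝒯) ≤ n - 1`
(i.e. `Ext^k(M, X) = 0` for `M ∈ 𝒯`, `X ∈ 𝒳`, `k ≥ n`), then `𝒯 = 𝒳 ∩ 𝒯^⊥ = 𝒳`. -/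
theorem stmt_4 (n : ℕ) (hn : 1 ≤ n) (𝒳 𝒯 α β : Set C)
    (hadd : IsAddClosed 𝒯)
    (hα : α ⊆ rPerp 𝒳 ∩ rPerp 𝒯) (hαcog : IsRelCogen α 𝒳)
    (hβ : β ⊆ lPerp 𝒳 ∩ lPerp 𝒯) (hβgen : IsRelGen β 𝒳)
    (hff : Precovering 𝒯 ∧ Preenveloping 𝒯)
    (he1 : 𝒳 ∩ {M | ∀ T ∈ 𝒯, ∀ i, 1 ≤ i → i < n → extZero M T i} = 𝒯)
    (he2 : 𝒳 ∩ {M | ∀ T ∈ 𝒯, ∀ i, 1 ≤ i → i < n → extZero T M i} = 𝒯)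
    (hpd : ∀ M ∈ 𝒯, ∀ X ∈ 𝒳, ∀ k, n ≤ k → extZero M X k) :
    𝒯 = 𝒳 ∩ rPerp 𝒯 ∧ 𝒯 = 𝒳 := by
  -- 𝒯 ⊆ 𝒳
  have hTX : 𝒯 ⊆ 𝒳 := by
    intro T hT; rw [← he1] at hT; exact hT.1
  -- 𝒯 ⊆ rPerp 𝒯
  have hTperp : 𝒯 ⊆ rPerp 𝒯 := by
    intro T' hT' T hT i hi
    rcases lt_or_ge i n with h | h
    · have := hT'; rw [← he2] at this
      exact this.2 T hT i hi h
    · exact hpd T hT T' (hTX hT') i h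
  -- β ⊆ 𝒯
  have hβT : β ⊆ 𝒯 := by
    intro W hW
    rw [← he1]
    exact ⟨hβgen.1 hW, fun T hT i hi _ => (hβ hW).2 T hT i hi⟩
  -- key vanishing: ∀ i ≥ 1, ∀ X ∈ 𝒳, ∀ T ∈ 𝒯, Ext^i(T,X) = 0
  have key : ∀ i, 1 ≤ i → ∀ X ∈ 𝒳, ∀ T ∈ 𝒯, extZero T X i := by
    intro i hi
    by_cases hin : n ≤ i
    · intro X hX T hT; exact hpd T hT X hX i hin
    · push_neg at hin
      -- downward induction on i from n
      have main : ∀ k, ∀ i, 1 ≤ i → i + k = n → ∀ X ∈ 𝒳, ∀ T ∈ 𝒯, extZero T X i := by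
        intro k
        induction k with
        | zero => intro i _ hik X hX T hT; exact hpd T hT X hX i (by omega)
        | succ m ih =>
          intro i hi1 hik X hX T hT
          obtain ⟨X', W, hWβ, hX', hses⟩ := hβgen.2 X hX
          refine extZero_of_ses T hses i ?_ ?_
          · exact hTperp (hβT hWβ) T hT i (by omega)
          · rcases Nat.lt_or_ge (i + 1) n with h | h
            · exact ih (i + 1) (by omega) (by omega) X' hX' T hT
            · exact hpd T hT X' hX' (i + 1) h
      exact main (n - i) i hi (by omega)
  -- 𝒳 ⊆ 𝒯
  have hXT : 𝒳 ⊆ 𝒯 := by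
    intro X hX
    rw [← he2]
    exact ⟨hX, fun T hT i hi _ => key i hi X hX T hT⟩
  constructor
  · apply le_antisymm
    · intro T hT; exact ⟨hTX hT, hTperp hT⟩
    · intro M hM
      rw [← he2]
      exact ⟨hM.1, fun T hT i hi _ => hM.2 T hT i hi⟩
  · exact le_antisymm hTX hXT
end

section
/- Let C be an abelian category, X ⊆ C, and B ⊆ C an X-coresolving class. Then ⊥₁(B ∩ X) ∩ X = ⊥(B ∩ X) ∩ X. -/
open CategoryTheory CategoryTheory.Limits

universe w v u

variable {C : Type u} [Category.{v} C] [Abelian C] [HasExt.{w} C]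

/-- Dimension shift: if `0 → B → W → X' → 0` is exact, `Ext M X' n₀ = 0` and
`Ext M W (n₀+1) = 0`, then `Ext M B (n₀+1) = 0`. -/
lemma extZero_shift {M : C} {S : ShortComplex C} (hS : S.ShortExact) {n₀ n₁ : ℕ}
    (hn : n₀ + 1 = n₁) (h3 : extZero M S.X₃ n₀) (h2 : extZero M S.X₂ n₁) :
    extZero M S.X₁ n₁ := by
  constructor
  intro x y
  have key : ∀ z : Abelian.Ext M S.X₁ n₁, z = 0 := by
    intro z
    obtain ⟨x₃, hx₃⟩ := Abelian.Ext.covariant_sequence_exact₁ M hS z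
      (h2.elim _ 0) hn
    rw [← hx₃, h3.elim x₃ 0, Abelian.Ext.zero_comp]
  rw [key x, key y]

/-- if `ℬ` is `𝒳`-coresolving, then
`⊥₁(ℬ ∩ 𝒳) ∩ 𝒳 = ⊥(ℬ ∩ 𝒳) ∩ 𝒳`. -/
theorem stmt_5 (𝒳 ℬ : Set C) (hcor : IsCoresolving ℬ 𝒳) :
    lPerp1 (ℬ ∩ 𝒳) ∩ 𝒳 = lPerp (ℬ ∩ 𝒳) ∩ 𝒳 := by
  obtain ⟨⟨α, hαB𝒳, hαinj, hαX, hαcog⟩, hcoker, hext⟩ := hcor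
  ext M
  simp only [Set.mem_inter_iff]
  constructor
  · rintro ⟨hM1, hMX⟩
    refine ⟨fun N hN i hi => ?_, hMX⟩
    induction i generalizing N with
    | zero => omega
    | succ n ih =>
      rcases Nat.eq_zero_or_pos n with hn | hn
      · subst hn; exact hM1 N hN
      · -- embed N in a cogenerator
        obtain ⟨W, X', hWα, hX'X, f, g, w, hses⟩ := hαcog N hN.2
        have hWB𝒳 : W ∈ ℬ ∩ 𝒳 := hαB𝒳 hWα
        have hX'B : X' ∈ ℬ := hcoker N W X' hN hWB𝒳 ⟨f, g, w, hses⟩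
        exact extZero_shift hses rfl (ih X' ⟨hX'B, hX'X⟩ hn)
          (hαinj M hMX W hWα (n + 1) (by omega))
  · rintro ⟨hM, hMX⟩
    exact ⟨fun N hN => hM N hN 1 one_pos, hMX⟩
end

section
/- Let C be an abelian category, (A,B) a pair of classes and X ⊆ C with Ext^1(A∩X, B∩X)=0. If B is X-coresolving and A is closed under epi-kernels in A∩X, then for any exact sequence 0 → K → A → A' → 0 with A, A' ∈ A∩X and K ∈ X, we have Ext^i(K, B) = 0 for all B ∈ B∩X and all i > 0. -/
open CategoryTheory CategoryTheory.Limits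

universe w v u

variable {C : Type u} [Category.{v} C] [Abelian C] [HasExt.{w} C]

/-- Dimension shifting step: from a SES `B ↪ W ↠ B'`, if `Ext^n(A,B') = 0` and
`Ext^(n+1)(A,W) = 0` then `Ext^(n+1)(A,B) = 0`. -/
lemma extZero_step {A : C} {S : ShortComplex C} (hS : S.ShortExact) (n : ℕ)
    (h3 : extZero A S.X₃ n) (h2 : extZero A S.X₂ (n + 1)) :
    extZero A S.X₁ (n + 1) := by
  have h3' : Subsingleton (Abelian.Ext A S.X₃ n) := h3
  have h2' : Subsingleton (Abelian.Ext A S.X₂ (n + 1)) := h2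
  constructor
  intro x y
  have key : ∀ z : Abelian.Ext A S.X₁ (n + 1), z = 0 := by
    intro z
    have hz : z.comp (Abelian.Ext.mk₀ S.f) (add_zero (n + 1)) = 0 :=
      Subsingleton.elim _ _
    obtain ⟨x₃, hx₃⟩ := Abelian.Ext.covariant_sequence_exact₁ A hS z hz rfl
    have : x₃ = 0 := Subsingleton.elim _ _
    rw [this] at hx₃
    rw [← hx₃, Abelian.Ext.zero_comp]
  rw [key x, key y]

/-- García-Rozas type lemma: assume `Ext^1(𝒜∩𝒳, ℬ∩𝒳) = 0`, `ℬ` is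
`𝒳`-coresolving, and `𝒜` is closed under epi-kernels in `𝒜 ∩ 𝒳`. Then for any
exact sequence `0 → K → A → A' → 0` with `A, A' ∈ 𝒜 ∩ 𝒳` and `K ∈ 𝒳`, we have
`Ext^i(K, B) = 0` for all `B ∈ ℬ ∩ 𝒳` and all `i > 0`. -/
theorem stmt_6 (𝒜 ℬ 𝒳 : Set C)
    (h1 : ∀ A ∈ 𝒜 ∩ 𝒳, ∀ B ∈ ℬ ∩ 𝒳, extZero A B 1)
    (hcor : IsCoresolving ℬ 𝒳)
    (hker : ∀ (K M M'' : C), M ∈ 𝒜 ∩ 𝒳 → M'' ∈ 𝒜 ∩ 𝒳 → SES K M M'' → K ∈ 𝒜) :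
    ∀ (K A A' : C), A ∈ 𝒜 ∩ 𝒳 → A' ∈ 𝒜 ∩ 𝒳 → K ∈ 𝒳 → SES K A A' →
      ∀ B ∈ ℬ ∩ 𝒳, ∀ i, 0 < i → extZero K B i := by
  -- First: hereditariness, `Ext^i(A, B) = 0` for all `A ∈ 𝒜 ∩ 𝒳`, `B ∈ ℬ ∩ 𝒳`, `i ≥ 1`.
  obtain ⟨⟨α, hα1, hα2, hα3, hα4⟩, hcok, hext⟩ := hcor
  have hered : ∀ n : ℕ, ∀ A ∈ 𝒜 ∩ 𝒳, ∀ B ∈ ℬ ∩ 𝒳, extZero A B (n + 1) := by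
    intro n
    induction n with
    | zero => exact h1
    | succ n ih =>
      intro A hA B hB
      obtain ⟨W, B', hW, hB'X, f, g, w, hSE⟩ := hα4 B hB.2
      have hWBX : W ∈ ℬ ∩ 𝒳 := hα1 hW
      have hB'B : B' ∈ ℬ := hcok B W B' hB hWBX ⟨f, g, w, hSE⟩
      exact extZero_step hSE (n + 1) (ih A hA B' ⟨hB'B, hB'X⟩)
        (hα2 A hA.2 W hW (n + 1 + 1) (by omega))
  intro K A A' hA hA' hKX hSES B hB i hi
  have hKA : K ∈ 𝒜 := hker K A A' hA hA' hSES
  obtain ⟨j, rfl⟩ := Nat.exists_eq_add_of_lt hi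
  rw [Nat.zero_add]
  exact hered j K ⟨hKA, hKX⟩ B hB
end

section
/- Let C be an abelian category, (A,B) a pair of classes and X ⊆ C with Ext^1(A∩X, B∩X)=0, ω ⊆ A an X-projective relative generator in X, and α ⊆ B an X-injective relative cogenerator in X. Then the following are equivalent: (a) for every exact sequence 0 → K → A → A' → 0 with A,A' ∈ A∩X, K ∈ X, one has K ∈ ⊥(B∩X); (b) for every exact sequence 0 → B' → B → C → 0 with B,B' ∈ B∩X, C ∈ X, one has C ∈ (A∩X)^⊥; (c) id_{A∩X}(B∩X) = 0, i.e. Ext^i(A∩X, B∩X)=0 for all i ≥ 1. -/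
open CategoryTheory CategoryTheory.Limits

universe w v u

variable {C : Type u} [Category.{v} C] [Abelian C] [HasExt.{w} C]

lemma extZero_of {M N : C} {i : ℕ} (h : ∀ x : Abelian.Ext M N i, x = 0) :
    extZero M N i := ⟨fun a b => by rw [h a, h b]⟩

lemma eq_zero_of_extZero {M N : C} {i : ℕ} (h : extZero M N i)
    (x : Abelian.Ext M N i) : x = 0 := @Subsingleton.elim _ h x 0

lemma contraX1 {S : ShortComplex C} (hS : S.ShortExact) (Y : C) (n : ℕ)
    (h2 : extZero S.X₂ Y n) (h3 : extZero S.X₃ Y (n + 1)) : extZero S.X₁ Y n := by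
  refine extZero_of fun z => ?_
  obtain ⟨x₂, hx₂⟩ := Abelian.Ext.contravariant_sequence_exact₁ hS Y z (n₁ := n + 1) (by omega)
    (eq_zero_of_extZero h3 _)
  rw [← hx₂, eq_zero_of_extZero h2 x₂, Abelian.Ext.comp_zero]

lemma contraX3 {S : ShortComplex C} (hS : S.ShortExact) (Y : C) (n : ℕ)
    (h2 : extZero S.X₂ Y (n + 1)) (h1 : extZero S.X₁ Y n) :
    extZero S.X₃ Y (n + 1) := by
  refine extZero_of fun z => ?_
  obtain ⟨x₁, hx₁⟩ := Abelian.Ext.contravariant_sequence_exact₃ hS Y z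
    (eq_zero_of_extZero h2 _) (n₀ := n) (by omega)
  rw [← hx₁, eq_zero_of_extZero h1 x₁, Abelian.Ext.comp_zero]

lemma covX1 {S : ShortComplex C} (hS : S.ShortExact) (X : C) (n : ℕ)
    (h2 : extZero X S.X₂ (n + 1)) (h3 : extZero X S.X₃ n) :
    extZero X S.X₁ (n + 1) := by
  refine extZero_of fun z => ?_
  obtain ⟨x₃, hx₃⟩ := Abelian.Ext.covariant_sequence_exact₁ X hS z
    (eq_zero_of_extZero h2 _) (n₀ := n) rfl
  rw [← hx₃, eq_zero_of_extZero h3 x₃, Abelian.Ext.zero_comp]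

lemma covX3 {S : ShortComplex C} (hS : S.ShortExact) (X : C) (n : ℕ)
    (h2 : extZero X S.X₂ n) (h1 : extZero X S.X₁ (n + 1)) :
    extZero X S.X₃ n := by
  refine extZero_of fun z => ?_
  obtain ⟨x₂, hx₂⟩ := Abelian.Ext.covariant_sequence_exact₃ X hS z (n₁ := n + 1) rfl
    (eq_zero_of_extZero h1 _)
  rw [← hx₂, eq_zero_of_extZero h2 x₂, Abelian.Ext.zero_comp]

/-- assume `Ext^1(𝒜∩𝒳, ℬ∩𝒳) = 0`, `ω ⊆ 𝒜` is an `𝒳`-projective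
relative generator in `𝒳`, and `α ⊆ ℬ` is an `𝒳`-injective relative cogenerator
in `𝒳`. Then (a), (b) and (c) are equivalent. -/
theorem stmt_7 (𝒜 ℬ 𝒳 ω α : Set C)
    (h1 : ∀ A ∈ 𝒜 ∩ 𝒳, ∀ B ∈ ℬ ∩ 𝒳, extZero A B 1)
    (hω : ω ⊆ 𝒜) (hωproj : ∀ W ∈ ω, ∀ X ∈ 𝒳, ∀ i, 0 < i → extZero W X i)
    (hωgen : IsRelGen ω 𝒳)
    (hα : α ⊆ ℬ) (hαinj : ∀ X ∈ 𝒳, ∀ A ∈ α, ∀ i, 0 < i → extZero X A i)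
    (hαcog : IsRelCogen α 𝒳) :
    ((∀ (K A A' : C), A ∈ 𝒜 ∩ 𝒳 → A' ∈ 𝒜 ∩ 𝒳 → K ∈ 𝒳 → SES K A A' →
        K ∈ lPerp (ℬ ∩ 𝒳)) ↔
      (∀ A ∈ 𝒜 ∩ 𝒳, ∀ B ∈ ℬ ∩ 𝒳, ∀ i, 1 ≤ i → extZero A B i)) ∧
    ((∀ (B' B D : C), B ∈ ℬ ∩ 𝒳 → B' ∈ ℬ ∩ 𝒳 → D ∈ 𝒳 → SES B' B D →
        D ∈ rPerp (𝒜 ∩ 𝒳)) ↔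
      (∀ A ∈ 𝒜 ∩ 𝒳, ∀ B ∈ ℬ ∩ 𝒳, ∀ i, 1 ≤ i → extZero A B i)) := by
  constructor
  · constructor
    · intro ha A hA B hB i hi
      obtain ⟨K, W, hW, hK, ses⟩ := hωgen.2 A hA.2
      have hKperp : K ∈ lPerp (ℬ ∩ 𝒳) :=
        ha K W A ⟨hω hW, hωgen.1 hW⟩ hA hK ses
      obtain ⟨f, g, w, hse⟩ := ses
      rcases i with _ | _ | i
      · omega
      · exact h1 A hA B hB
      · exact contraX3 hse B (i + 1) (hωproj W hW B hB.2 _ (by omega))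
          (hKperp B hB _ (by omega))
    · intro hc K A A' hA hA' hK ses B hB i hi
      obtain ⟨f, g, w, hse⟩ := ses
      exact contraX1 hse B i (hc A hA B hB i (by omega))
        (hc A' hA' B hB (i + 1) (by omega))
  · constructor
    · intro hb A hA B hB i hi
      obtain ⟨W, D, hW, hD, ses⟩ := hαcog.2 B hB.2
      have hDperp : D ∈ rPerp (𝒜 ∩ 𝒳) :=
        hb B W D ⟨hα hW, hαcog.1 hW⟩ hB hD ses
      obtain ⟨f, g, w, hse⟩ := ses
      rcases i with _ | _ | i
      · omega
      · exact h1 A hA B hB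
      · exact covX1 hse A (i + 1) (hαinj A hA.2 W hW _ (by omega))
          (hDperp A hA _ (by omega))
    · intro hc B' B D hB hB' hD ses A hA i hi
      obtain ⟨f, g, w, hse⟩ := ses
      exact covX3 hse A i (hc A hA B hB i (by omega))
        (hc A hA B' hB' (i + 1) (by omega))
end

section
/- Let C be an abelian category and X, Y ⊆ C such that there is an X-injective relative cogenerator in Y. Then there is a class Z ⊆ Y such that ⊥Y ∩ X = ⊥₁Z ∩ X. -/
open CategoryTheory CategoryTheory.Limits

universe w v u

variable {C : Type u} [Category.{v} C] [Abelian C] [HasExt.{w} C]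

/-- if there is an `𝒳`-injective relative cogenerator in `𝒴`, then
there is a class `𝒵 ⊆ 𝒴` such that `⊥𝒴 ∩ 𝒳 = ⊥₁𝒵 ∩ 𝒳`. -/
theorem stmt_8 (𝒳 𝒴 : Set C)
    (h : ∃ α : Set C, (∀ X ∈ 𝒳, ∀ A ∈ α, ∀ i, 0 < i → extZero X A i) ∧
      IsRelCogen α 𝒴) :
    ∃ 𝒵 : Set C, 𝒵 ⊆ 𝒴 ∧ lPerp 𝒴 ∩ 𝒳 = lPerp1 𝒵 ∩ 𝒳 := by
  obtain ⟨α, hinj, hαsub, hcog⟩ := h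
  refine ⟨𝒴, le_refl _, ?_⟩
  ext M
  simp only [Set.mem_inter_iff]
  constructor
  · rintro ⟨hM, hX⟩
    exact ⟨fun N hN => hM N hN 1 one_pos, hX⟩
  · rintro ⟨hM, hX⟩
    refine ⟨?_, hX⟩
    intro N hN i hi
    induction i generalizing N with
    | zero => exact absurd hi (lt_irrefl 0)
    | succ n ih =>
      rcases Nat.eq_zero_or_pos n with hn | hn
      · subst hn; exact hM N hN
      · obtain ⟨A, N', hA, hN', f, g, w, hSES⟩ := hcog N hN
        constructor
        intro x y
        suffices hz : ∀ z : Abelian.Ext M N (n + 1), z = 0 by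
          rw [hz x, hz y]
        intro z
        have hIA : Subsingleton (Abelian.Ext M A (n + 1)) :=
          hinj M hX A hA (n + 1) (Nat.succ_pos n)
        have hz0 : z.comp (Abelian.Ext.mk₀ f) (add_zero (n+1)) = 0 :=
          Subsingleton.elim _ _
        obtain ⟨x₃, hx₃⟩ := Abelian.Ext.covariant_sequence_exact₁ M hSES z hz0 rfl
        have : Subsingleton (Abelian.Ext M N' n) := ih N' hN' hn
        have : x₃ = 0 := Subsingleton.elim _ _
        rw [this] at hx₃
        rw [← hx₃, Abelian.Ext.zero_comp]
end

section
/- Let C be an abelian category, X ⊆ C closed under extensions, and (A,B) a left X-complete pair such that B is closed under extensions and contains a relative cogenerator in X. Then (A,B) is right X-complete: every M ∈ X admits an exact sequence 0 → M → B → A → 0 with B ∈ B∩X and A ∈ A∩X. -/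
open CategoryTheory CategoryTheory.Limits

universe w v u

variable {C : Type u} [Category.{v} C] [Abelian C] [HasExt.{w} C]

lemma pullback_ses_snd {K Y₁ Z Y₂ : C} {f : Y₁ ⟶ Z} (g : Y₂ ⟶ Z) {k : K ⟶ Y₁}
    (w : k ≫ f = 0) (hse : (ShortComplex.mk k f w).ShortExact) :
    IsSES (pullback.lift k 0 (by rw [w, zero_comp]) : K ⟶ pullback f g) (pullback.snd f g) := by
  haveI : Epi f := hse.epi_g
  haveI : Mono k := hse.mono_f
  set u : K ⟶ pullback f g := pullback.lift k 0 (by rw [w, zero_comp]) with hu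
  have hufst : u ≫ pullback.fst f g = k := pullback.lift_fst _ _ _
  have hw : u ≫ pullback.snd f g = 0 := pullback.lift_snd _ _ _
  haveI : Mono u := by
    have : Mono (u ≫ pullback.fst f g) := by rw [hufst]; infer_instance
    exact mono_of_mono u (pullback.fst f g)
  have hker : IsLimit (KernelFork.ofι u hw) := by
    refine KernelFork.IsLimit.ofι' u hw (fun {T} t ht => ?_)
    have h1 : (t ≫ pullback.fst f g) ≫ f = 0 := by
      rw [Category.assoc, pullback.condition, ← Category.assoc, ht, zero_comp]
    refine ⟨hse.exact.lift (t ≫ pullback.fst f g) h1, ?_⟩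
    apply pullback.hom_ext
    · rw [Category.assoc, hufst]
      exact hse.exact.lift_f _ _
    · rw [Category.assoc, hw, comp_zero, ht]
  exact ⟨hw, { exact := ShortComplex.exact_of_f_is_kernel _ hker }⟩

lemma pullback_ses_fst {K Y₁ Z Y₂ : C} (f : Y₁ ⟶ Z) {g : Y₂ ⟶ Z} {k : K ⟶ Y₂}
    (w : k ≫ g = 0) (hse : (ShortComplex.mk k g w).ShortExact) :
    IsSES (pullback.lift 0 k (by rw [w, zero_comp]) : K ⟶ pullback f g) (pullback.fst f g) := by
  haveI : Epi g := hse.epi_g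
  haveI : Mono k := hse.mono_f
  set u : K ⟶ pullback f g := pullback.lift 0 k (by rw [w, zero_comp]) with hu
  have husnd : u ≫ pullback.snd f g = k := pullback.lift_snd _ _ _
  have hw : u ≫ pullback.fst f g = 0 := pullback.lift_fst _ _ _
  haveI : Mono u := by
    have : Mono (u ≫ pullback.snd f g) := by rw [husnd]; infer_instance
    exact mono_of_mono u (pullback.snd f g)
  have hker : IsLimit (KernelFork.ofι u hw) := by
    refine KernelFork.IsLimit.ofι' u hw (fun {T} t ht => ?_)
    have h1 : (t ≫ pullback.snd f g) ≫ g = 0 := by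
      rw [Category.assoc, ← pullback.condition, ← Category.assoc, ht, zero_comp]
    refine ⟨hse.exact.lift (t ≫ pullback.snd f g) h1, ?_⟩
    apply pullback.hom_ext
    · rw [Category.assoc, hw, comp_zero, ht]
    · rw [Category.assoc, husnd]
      exact hse.exact.lift_f _ _
  exact ⟨hw, { exact := ShortComplex.exact_of_f_is_kernel _ hker }⟩

/-- Salce's Lemma: if `𝒳` is closed under extensions and `(𝒜, ℬ)`
is a left `𝒳`-complete pair with `ℬ` closed under extensions and containing a
relative cogenerator in `𝒳`, then `(𝒜, ℬ)` is right `𝒳`-complete. -/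
theorem stmt_10 (𝒳 𝒜 ℬ : Set C) (hX : IsExtClosed 𝒳)
    (hlc : LeftComplete 𝒜 ℬ 𝒳) (hB : IsExtClosed ℬ)
    (hcog : ∃ α : Set C, α ⊆ ℬ ∧ IsRelCogen α 𝒳) :
    RightComplete 𝒜 ℬ 𝒳 := by
  intro M hM
  obtain ⟨α, hαB, hα𝒳, hcg⟩ := hcog
  obtain ⟨W, X', hWα, hX', m, q, wq, hq⟩ := hcg M hM
  obtain ⟨B, A, hB', hA', i, gA, wA, hgA⟩ := hlc X' hX'
  have h1 := pullback_ses_snd q wA hgA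
  have h2 := pullback_ses_fst gA wq hq
  have hSES1 : SES B (pullback gA q) W := ⟨_, _, h1⟩
  have hPB : pullback gA q ∈ ℬ := hB B _ W hB'.1 (hαB hWα) hSES1
  have hPX : pullback gA q ∈ 𝒳 := hX B _ W hB'.2 (hα𝒳 hWα) hSES1
  exact ⟨_, A, ⟨hPB, hPX⟩, hA', _, _, h2⟩
end

section
/- Let C be an abelian category, X, T ⊆ C, and α ⊆ T^⊥ ∩ X^⊥ a relative cogenerator in X. Then coresdim_{T^⊥∩X}^X(X) ≤ pd_X(T), i.e., every A ∈ X admits a (T^⊥∩X)_X-coresolution of length at most pd_X(T). -/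
open CategoryTheory CategoryTheory.Limits

universe w v u

variable {C : Type u} [Category.{v} C] [Abelian C] [HasExt.{w} C]

/-- Dimension shift: for a SES `0 → A → B → D → 0`, if `Ext^k(M,B)` and
`Ext^{k+1}(M,A)` vanish, so does `Ext^k(M,D)`. -/
lemma extZero_of_ses_aux {A B D M : C} {f : A ⟶ B} {g : B ⟶ D} (w : f ≫ g = 0)
    (hS : (ShortComplex.mk f g w).ShortExact) (k : ℕ)
    (h2 : Subsingleton (Abelian.Ext M B k))
    (h1 : Subsingleton (Abelian.Ext M A (k + 1))) :
    Subsingleton (Abelian.Ext M D k) := by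
  constructor
  intro x y
  suffices h : ∀ z : Abelian.Ext M D k, z = 0 by rw [h x, h y]
  intro z
  obtain ⟨x₂, hx₂⟩ := Abelian.Ext.covariant_sequence_exact₃ M hS z rfl
    (Subsingleton.elim _ 0)
  rw [← hx₂, Subsingleton.elim x₂ 0, Abelian.Ext.zero_comp]

/-- if `α ⊆ 𝒯^⊥ ∩ 𝒳^⊥` is a relative cogenerator in `𝒳` and
`pd_𝒳(𝒯) ≤ n`, then every `A ∈ 𝒳` admits a `(𝒯^⊥ ∩ 𝒳)_𝒳`-coresolution of
length at most `n`. -/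
theorem stmt_11 (𝒳 𝒯 α : Set C) (hα : α ⊆ rPerp 𝒯 ∩ rPerp 𝒳)
    (hcog : IsRelCogen α 𝒳) (n : ℕ) (hpd : pdLE 𝒳 𝒯 n) :
    ∀ A ∈ 𝒳, ∃ m ≤ n, CoresLen (rPerp 𝒯 ∩ 𝒳) 𝒳 A m := by
  intro A hA
  have key : ∀ p : {Z : C // Z ∈ 𝒳}, ∃ q : {Z : C // Z ∈ 𝒳},
      ∃ W, W ∈ α ∧ SES p.1 W q.1 := by
    rintro ⟨Z, hZ⟩
    obtain ⟨W, X', hW, hX', hses⟩ := hcog.2 Z hZ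
    exact ⟨⟨X', hX'⟩, W, hW, hses⟩
  choose step Wf hWf hses using key
  let F : ℕ → {Z : C // Z ∈ 𝒳} := fun i => Nat.rec ⟨A, hA⟩ (fun _ p => step p) i
  have hF : ∀ i, F (i + 1) = step (F i) := fun i => rfl
  have hses' : ∀ i, SES (F i).1 (Wf (F i)) (F (i + 1)).1 := by
    intro i; rw [hF i]; exact hses (F i)
  have vanish : ∀ i, ∀ M ∈ 𝒯, ∀ k, 0 < k → n < k + i →
      extZero M (F i).1 k := by
    intro i
    induction i with
    | zero =>
      intro M hM k hk hnk
      exact hpd M hM A hA k (by omega)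
    | succ i ih =>
      intro M hM k hk hnk
      obtain ⟨f, g, w, hS⟩ := hses' i
      exact extZero_of_ses_aux w hS k ((hα (hWf (F i))).1 M hM k hk)
        (ih M hM (k + 1) (by omega) (by omega))
  refine ⟨n, le_refl n, fun i => (F i).1, fun i => Wf (F i), rfl,
    ⟨(F n).2, fun M hM k hk => vanish n M hM k hk (by omega), (F n).2⟩,
    fun i _ => ⟨fun M hM k hk => (hα (hWf (F i))).1 M hM k hk, hcog.1 (hWf (F i))⟩,
    fun i _ _ => (F i).2, fun i _ => hses' i⟩
end

section
/- Let C be an abelian category, X, T ⊆ C, and α ⊆ T^⊥ ∩ X^⊥ a relative cogenerator in X. Then pd_X(⊥(T^⊥ ∩ X)) ≤ pd_X(T). -/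
open CategoryTheory CategoryTheory.Limits

universe w v u

variable {C : Type u} [Category.{v} C] [Abelian C] [HasExt.{w} C]

/-- if `α ⊆ 𝒯^⊥ ∩ 𝒳^⊥` is a relative cogenerator in `𝒳`, then
`pd_𝒳(⊥(𝒯^⊥ ∩ 𝒳)) ≤ pd_𝒳(𝒯)`. -/
theorem stmt_12 (𝒳 𝒯 α : Set C) (hα : α ⊆ rPerp 𝒯 ∩ rPerp 𝒳)
    (hcog : IsRelCogen α 𝒳) :
    ∀ n : ℕ, pdLE 𝒳 𝒯 n → pdLE 𝒳 (lPerp (rPerp 𝒯 ∩ 𝒳)) n := by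
  -- auxiliary claim, by induction on n, pointwise in X
  have key : ∀ n : ℕ, ∀ X ∈ 𝒳, (∀ T' ∈ 𝒯, ∀ i, n < i → extZero T' X i) →
      ∀ M ∈ lPerp (rPerp 𝒯 ∩ 𝒳), ∀ k, n < k → extZero M X k := by
    intro n
    induction n with
    | zero =>
      intro X hX hXT M hM k hk
      exact hM X ⟨fun T' hT' i hi => hXT T' hT' i hi, hX⟩ k hk
    | succ n ih =>
      intro X hX hXT M hM k hk
      obtain ⟨W, X', hWα, hX'𝒳, f, g, w, hS⟩ := hcog.2 X hX
      have hW𝒳 : W ∈ 𝒳 := hcog.1 hWα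
      have hWperp : W ∈ rPerp 𝒯 ∩ 𝒳 := ⟨(hα hWα).1, hW𝒳⟩
      -- Ext^i(T', X') = 0 for i > n
      have hX'T : ∀ T' ∈ 𝒯, ∀ i, n < i → extZero T' X' i := by
        intro T' hT' i hi
        have h1 : extZero T' W i := (hα hWα).1 T' hT' i (by omega)
        have h2 : extZero T' X (i + 1) := hXT T' hT' (i + 1) (by omega)
        constructor
        intro x y
        have hz : ∀ x₃ : Abelian.Ext T' X' i, x₃ = 0 := by
          intro x₃
          obtain ⟨x₂, hx₂⟩ := Abelian.Ext.covariant_sequence_exact₃ T' hS x₃ rfl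
            (h2.elim _ 0)
          rw [← hx₂, h1.elim x₂ 0, Abelian.Ext.zero_comp]
        rw [hz x, hz y]
      have hX'M : ∀ k', n < k' → extZero M X' k' := ih X' hX'𝒳 hX'T M hM
      -- now shift back
      constructor
      intro x y
      have hz : ∀ x₁ : Abelian.Ext M X k, x₁ = 0 := by
        intro x₁
        have hW : extZero M W k := hM W hWperp k (by omega)
        obtain ⟨x₃, hx₃⟩ := Abelian.Ext.covariant_sequence_exact₁ M hS x₁
          (hW.elim _ 0) (n₀ := k - 1) (by omega)
        rw [← hx₃, (hX'M (k - 1) (by omega)).elim x₃ 0, Abelian.Ext.zero_comp]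
      rw [hz x, hz y]
  intro n hpd M hM X hX k hk
  exact key n X hX (fun T' hT' i hi => hpd T' hT' X hX i hi) M hM k hk
end

section
/- Let C be an abelian category and X, Y, Z ⊆ C with Z closed under extensions. Then for any L ∈ Z, id_X(L) ≤ id_X(Y∩Z) + coresdim_Y^Z(L), where coresdim_Y^Z(L) denotes the minimal length of a Y_Z-coresolution of L. -/
open CategoryTheory CategoryTheory.Limits

universe w v u

variable {C : Type u} [Category.{v} C] [Abelian C] [HasExt.{w} C]

lemma extZero_of_ses_s13 {A B D X : C} (h : SES A B D) (n₀ : ℕ)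
    (h1 : extZero X D n₀) (h2 : extZero X B (n₀ + 1)) : extZero X A (n₀ + 1) := by
  obtain ⟨f, g, w, hS⟩ := h
  constructor
  intro x y
  have key : ∀ z : Abelian.Ext X A (n₀ + 1), z = 0 := by
    intro z
    have hz : z.comp (Abelian.Ext.mk₀ f) (add_zero _) = 0 := by
      have := h2.elim (z.comp (Abelian.Ext.mk₀ f) (add_zero _)) 0
      exact this
    obtain ⟨x₃, hx₃⟩ := Abelian.Ext.covariant_sequence_exact₁ X hS z hz rfl
    have : x₃ = 0 := h1.elim x₃ 0
    rw [this] at hx₃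
    rw [← hx₃, Abelian.Ext.zero_comp]
  rw [key x, key y]

/-- if `𝒵` is closed under extensions, then for `L ∈ 𝒵`,
`id_𝒳(L) ≤ id_𝒳(𝒴 ∩ 𝒵) + coresdim_𝒴^𝒵(L)`. -/
theorem stmt_13 (𝒳 𝒴 𝒵 : Set C) (hZ : IsExtClosed 𝒵) (L : C) (hL : L ∈ 𝒵)
    (m k : ℕ)
    (hid : ∀ N ∈ 𝒴 ∩ 𝒵, ∀ X ∈ 𝒳, ∀ j, m < j → extZero X N j)
    (hcor : ∃ m' ≤ k, CoresLen 𝒴 𝒵 L m') :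
    ∀ X ∈ 𝒳, ∀ j, m + k < j → extZero X L j := by
  obtain ⟨m', hm'k, Z, Y, hZ0, hZm, hY, hZmid, hses⟩ := hcor
  -- all Z i are in 𝒵 for i ≤ m'
  have hZin : ∀ i ≤ m', Z i ∈ 𝒵 := by
    intro i hi
    rcases Nat.eq_or_lt_of_le hi with h | h
    · rw [h]; exact hZm.1
    rcases Nat.eq_zero_or_pos i with h0 | h0
    · rw [h0, hZ0]; exact hL
    · exact hZmid i h0 h
  -- all Y i are in 𝒴 ∩ 𝒵 for i < m'
  have hYin : ∀ i < m', Y i ∈ 𝒴 ∩ 𝒵 := by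
    intro i hi
    refine ⟨hY i hi, hZ _ _ _ (hZin i (le_of_lt hi)) (hZin (i + 1) hi) (hses i hi)⟩
  -- descending induction
  have key : ∀ d, d ≤ m' → ∀ X ∈ 𝒳, ∀ j, m + d < j → extZero X (Z (m' - d)) j := by
    intro d
    induction d with
    | zero =>
      intro _ X hX j hj
      simpa using hid (Z m') ⟨hZm.2, hZm.1⟩ X hX j (by omega)
    | succ d ih =>
      intro hd X hX j hj
      have hd' : d ≤ m' := by omega
      have hi : m' - (d + 1) < m' := by omega
      have hsucc : m' - (d + 1) + 1 = m' - d := by omega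
      obtain ⟨j', rfl⟩ : ∃ j', j = j' + 1 := ⟨j - 1, by omega⟩
      refine extZero_of_ses_s13 (B := Y (m' - (d + 1))) (D := Z (m' - d)) ?_ j' ?_ ?_
      · have := hses (m' - (d + 1)) hi
        rwa [hsucc] at this
      · exact ih hd' X hX j' (by omega)
      · exact hid _ (hYin _ hi) X hX (j' + 1) (by omega)
  intro X hX j hj
  have := key m' le_rfl X hX j (by omega)
  rwa [Nat.sub_self, hZ0] at this
end

section
/- Let C be an abelian category, X ⊆ C closed under extensions, and (A,B) a right X-complete, X-hereditary pair with B closed under direct summands. Then for every M ∈ X admitting a finite B_X-coresolution, id_{A∩X}(M) = coresdim_B^X(M). -/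
open CategoryTheory CategoryTheory.Limits

universe w v u

variable {C : Type u} [Category.{v} C] [Abelian C] [HasExt.{w} C]

/-!
A coresolution `0 → M → B₀ → ⋯ → Bₘ → 0` forces `Ext^k(A, M) = 0` for `k > m` and
`A ∈ 𝒜 ∩ 𝒳` by dimension shifting, since the pair is hereditary. Conversely, if
`Ext^k(𝒜 ∩ 𝒳, M)` vanishes beyond `n`, a right approximation `0 → M → B → A → 0` shifts
the vanishing to `A`, which by induction has a coresolution of length `n - 1`; for
`n = 0` the vanishing of `Ext^1(A, M)` splits the approximation, so `M` is a summand of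
`B ∈ ℬ`. Thus both sides of the equality are infima of the same set of lengths.
-/

open Abelian

namespace SES

variable {A B D : C}

lemma extZero_left_succ (h : SES A B D) {X : C} {n : ℕ}
    (hB : extZero X B (n + 1)) (hD : extZero X D n) : extZero X A (n + 1) := by
  obtain ⟨f, g, _, hS⟩ := h
  refine subsingleton_of_forall_eq 0 fun a => ?_
  obtain ⟨d, rfl⟩ := Ext.covariant_sequence_exact₁ X hS a (@Subsingleton.elim _ hB _ _) rfl
  rw [@Subsingleton.elim _ hD d 0, Ext.zero_comp]

lemma extZero_right (h : SES A B D) {X : C} {n : ℕ}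
    (hB : extZero X B n) (hA : extZero X A (n + 1)) : extZero X D n := by
  obtain ⟨f, g, _, hS⟩ := h
  refine subsingleton_of_forall_eq 0 fun a => ?_
  obtain ⟨b, rfl⟩ := Ext.covariant_sequence_exact₃ X hS a rfl (@Subsingleton.elim _ hA _ _)
  rw [@Subsingleton.elim _ hB b 0, Ext.zero_comp]

lemma exists_retraction (h : SES A B D) (hext : extZero D A 1) :
    ∃ (i : A ⟶ B) (r : B ⟶ A), i ≫ r = 𝟙 A := by
  obtain ⟨f, g, _, hS⟩ := h
  obtain ⟨x, hx⟩ := Ext.contravariant_sequence_exact₁ hS A (Ext.mk₀ (𝟙 A)) (add_zero 1)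
    (@Subsingleton.elim _ hext _ _)
  obtain ⟨r, rfl⟩ := (Ext.mk₀_bijective B A).2 x
  rw [Ext.mk₀_comp_mk₀] at hx
  exact ⟨f, r, (Ext.mk₀_bijective A A).1 hx⟩

end SES

section Coresolutions

variable {𝒳 𝒴 : Set C}

omit [HasExt.{w} C] in
lemma coresLen_zero_iff {M : C} : CoresLen 𝒴 𝒳 M 0 ↔ M ∈ 𝒳 ∩ 𝒴 := by
  constructor
  · rintro ⟨Z, Y, rfl, hZ, -⟩
    exact hZ
  · intro hM
    exact ⟨fun _ => M, fun _ => M, rfl, hM, by simp, by simp, by simp⟩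

omit [HasExt.{w} C] in
lemma coresLen_succ_iff {M : C} {n : ℕ} :
    CoresLen 𝒴 𝒳 M (n + 1) ↔
      ∃ Y Z : C, Y ∈ 𝒴 ∧ Z ∈ 𝒳 ∧ SES M Y Z ∧ CoresLen 𝒴 𝒳 Z n := by
  constructor
  · rintro ⟨Z, Y, rfl, hZn, hY, hZ, hses⟩
    refine ⟨Y 0, Z 1, hY 0 n.succ_pos, ?_, hses 0 n.succ_pos,
      Z ∘ Nat.succ, Y ∘ Nat.succ, rfl, hZn, fun i hi => hY _ (by omega),
      fun i hi hin => hZ _ (by omega) (by omega), fun i hi => hses _ (by omega)⟩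
    rcases n.eq_zero_or_pos with rfl | hn
    · exact hZn.1
    · exact hZ 1 one_pos (by omega)
  · rintro ⟨Y₀, Z₁, hY₀, hZ₁, hses₀, Z, Y, rfl, hZn, hY, hZ, hses⟩
    refine ⟨fun | 0 => M | i + 1 => Z i, fun | 0 => Y₀ | i + 1 => Y i, rfl, hZn, ?_, ?_, ?_⟩
    · rintro (_ | i) hi
      exacts [hY₀, hY i (by omega)]
    · rintro (_ | _ | i) hi hin
      exacts [absurd hi (lt_irrefl 0), hZ₁, hZ _ (by omega) (by omega)]
    · rintro (_ | i) hi
      exacts [hses₀, hses i (by omega)]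

end Coresolutions

section HereditaryPair

variable {𝒳 𝒜 ℬ : Set C}

lemma CoresLen.extZero_of_lt (hX : IsExtClosed 𝒳) (hher : IsHereditary 𝒜 ℬ 𝒳) :
    ∀ {m : ℕ} {M : C}, M ∈ 𝒳 → CoresLen ℬ 𝒳 M m →
      ∀ A ∈ 𝒜 ∩ 𝒳, ∀ k, m < k → extZero A M k
  | 0, M, _, h, A, hA, k, hk => hher A hA M (coresLen_zero_iff.1 h).symm k hk
  | m + 1, M, hM, h, A, hA, k + 1, hk => by
    obtain ⟨B, Z, hB, hZ, hses, hZres⟩ := coresLen_succ_iff.1 h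
    exact hses.extZero_left_succ (hher A hA B ⟨hB, hX M B Z hM hZ hses⟩ _ (by omega))
      (hZres.extZero_of_lt hX hher hZ A hA k (by omega))

lemma coresLen_of_extZero (hrc : RightComplete 𝒜 ℬ 𝒳) (hher : IsHereditary 𝒜 ℬ 𝒳)
    (hsmd : IsSmdClosed ℬ) :
    ∀ {n : ℕ} {M : C}, M ∈ 𝒳 → (∀ A ∈ 𝒜 ∩ 𝒳, ∀ k, n < k → extZero A M k) →
      CoresLen ℬ 𝒳 M n
  | 0, M, hM, hext => by
    obtain ⟨B, A, hB, hA, hses⟩ := hrc M hM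
    obtain ⟨i, r, hir⟩ := hses.exists_retraction (hext A hA 1 one_pos)
    exact coresLen_zero_iff.2 ⟨hM, hsmd M B i r hir hB.1⟩
  | n + 1, M, hM, hext => by
    obtain ⟨B, A, hB, hA, hses⟩ := hrc M hM
    have hextA : ∀ A' ∈ 𝒜 ∩ 𝒳, ∀ k, n < k → extZero A' A k := fun A' hA' k hk =>
      hses.extZero_right (hher A' hA' B hB k (by omega)) (hext A' hA' (k + 1) (by omega))
    exact coresLen_succ_iff.2
      ⟨B, A, hB.1, hA.2, hses, coresLen_of_extZero hrc hher hsmd hA.2 hextA⟩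

lemma extZero_of_lt_iff_coresLen (hX : IsExtClosed 𝒳) (hrc : RightComplete 𝒜 ℬ 𝒳)
    (hher : IsHereditary 𝒜 ℬ 𝒳) (hsmd : IsSmdClosed ℬ) {M : C} (hM : M ∈ 𝒳) (n : ℕ) :
    (∀ A ∈ 𝒜 ∩ 𝒳, ∀ k, n < k → extZero A M k) ↔ CoresLen ℬ 𝒳 M n :=
  ⟨coresLen_of_extZero hrc hher hsmd hM, CoresLen.extZero_of_lt hX hher hM⟩

end HereditaryPair

/-- if `𝒳` is closed under extensions and `(𝒜, ℬ)` is a right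
`𝒳`-complete, `𝒳`-hereditary pair with `ℬ` closed under direct summands, then for
every `M ∈ 𝒳` admitting a finite `ℬ_𝒳`-coresolution,
`id_{𝒜∩𝒳}(M) = coresdim_ℬ^𝒳(M)`. -/
theorem stmt_16 (𝒳 𝒜 ℬ : Set C) (hX : IsExtClosed 𝒳)
    (hrc : RightComplete 𝒜 ℬ 𝒳) (hher : IsHereditary 𝒜 ℬ 𝒳)
    (hsmd : IsSmdClosed ℬ) :
    ∀ M ∈ 𝒳, (∃ m : ℕ, CoresLen ℬ 𝒳 M m) →
      relId (𝒜 ∩ 𝒳) M = coresdim ℬ 𝒳 M := by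
  intro M hM _
  simp only [relId, coresdim, extZero_of_lt_iff_coresLen hX hrc hher hsmd hM]
end

section
/- Let C be an abelian category and (X, ω) a pair of classes with ω = add(ω) an X-injective relative cogenerator in X. Then X ∩ X^⊥ = ω. -/
open CategoryTheory CategoryTheory.Limits

universe w v u

variable {C : Type u} [Category.{v} C] [Abelian C] [HasExt.{w} C]

/-! If `X ∈ 𝒳 ∩ 𝒳^⊥`, the cogenerator gives `0 → X → W → X' → 0` with `W ∈ ω` and `X' ∈ 𝒳`.
Since `Ext¹(X', X) = 0`, the identity of `X` extends along `X → W`, so `X` is a direct summand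
of `W` and hence lies in `ω`. Conversely `ω ⊆ 𝒳`, and `ω ⊆ 𝒳^⊥` is exactly `𝒳`-injectivity. -/

lemma rPerp_subset_rPerp1 (𝒯 : Set C) : rPerp 𝒯 ⊆ rPerp1 𝒯 :=
  fun _ hN M hM ↦ hN M hM 1 one_pos

lemma CategoryTheory.ShortComplex.ShortExact.exists_retraction_of_subsingleton_ext_one
    {S : ShortComplex C} (hS : S.ShortExact) [Subsingleton (Abelian.Ext S.X₃ S.X₁ 1)] :
    ∃ r : S.X₂ ⟶ S.X₁, S.f ≫ r = 𝟙 S.X₁ := by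
  obtain ⟨φ, hφ⟩ := Abelian.Ext.contravariant_sequence_exact₁ hS S.X₁
    (Abelian.Ext.mk₀ (𝟙 S.X₁)) (add_zero 1) (Subsingleton.elim _ _)
  obtain ⟨r, rfl⟩ := Abelian.Ext.homEquiv₀.symm.surjective φ
  exact ⟨r, Abelian.Ext.homEquiv₀.symm.injective (by simpa using hφ)⟩

lemma mem_of_mem_rPerp1_of_isRelCogen {𝒳 ω : Set C} (hsmd : IsSmdClosed ω)
    (hcog : IsRelCogen ω 𝒳) {X : C} (hX : X ∈ 𝒳) (hperp : X ∈ rPerp1 𝒳) : X ∈ ω := by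
  obtain ⟨W, X', hW, hX', f, _, _, hS⟩ := hcog.2 X hX
  have : Subsingleton (Abelian.Ext X' X 1) := hperp X' hX'
  obtain ⟨r, hr⟩ := hS.exists_retraction_of_subsingleton_ext_one
  exact hsmd X W f r hr hW

/-- if `ω = add ω` is an `𝒳`-injective relative cogenerator in `𝒳`,
then `𝒳 ∩ 𝒳^⊥ = ω`. -/
theorem stmt_17 (𝒳 ω : Set C) (hadd : IsAddClosed ω)
    (hinj : ∀ X ∈ 𝒳, ∀ W ∈ ω, ∀ i, 0 < i → extZero X W i)
    (hcog : IsRelCogen ω 𝒳) :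
    𝒳 ∩ rPerp 𝒳 = ω := by
  refine Set.Subset.antisymm (fun X ⟨hX, hperp⟩ ↦ ?_) (fun W hW ↦ ⟨hcog.1 hW, ?_⟩)
  · exact mem_of_mem_rPerp1_of_isRelCogen hadd.2 hcog hX (rPerp_subset_rPerp1 𝒳 hperp)
  · exact fun X hX i hi ↦ hinj X hX W hW i hi
end
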